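/- Let x, y, z ∈ ℂ be roots of unity satisfying xyz + x + y + z = 0. Then some pair among {x, y, z} consists of 1 and −1; that is, (x,y) ∈ {(1,−1),(−1,1)}, or (x,z) ∈ {(1,−1),(−1,1)}, or (y,z) ∈ {(1,−1),(−1,1)}. -/

import Mathlib

/-- A complex number is a root of unity if some positive power of it equals `1`. -/
def IsRootOfUnity (ζ : ℂ) : Prop := ∃ n : ℕ, 0 < n ∧ ζ ^ n = 1

/-!
On the unit circle `conj x = x⁻¹`, so conjugating `xyz + x + y + z = 0` and clearing denominators
gives `xy + yz + zx + 1 = 0`. The difference and the sum of the two relations factor as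
`(x - 1)(y - 1)(z - 1) = 0` and `(x + 1)(y + 1)(z + 1) = 0`: some variable is `1` and some
variable is `-1`, necessarily a different one.
-/

lemma IsRootOfUnity.norm_eq_one {x : ℂ} (hx : IsRootOfUnity x) : ‖x‖ = 1 := by
  obtain ⟨n, hn, hxn⟩ := hx
  exact (pow_eq_one_iff_of_nonneg (norm_nonneg x) hn.ne').mp (by rw [← norm_pow, hxn, norm_one])

lemma mul_add_mul_add_mul_add_one_eq_zero_of_norm_eq_one {x y z : ℂ} (hx : ‖x‖ = 1)
    (hy : ‖y‖ = 1) (hz : ‖z‖ = 1) (h : x * y * z + x + y + z = 0) :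
    x * y + y * z + z * x + 1 = 0 := by
  have hx₀ : x ≠ 0 := norm_ne_zero_iff.mp (by simp [hx])
  have hy₀ : y ≠ 0 := norm_ne_zero_iff.mp (by simp [hy])
  have hz₀ : z ≠ 0 := norm_ne_zero_iff.mp (by simp [hz])
  have hconj := congrArg (starRingEnd ℂ) h
  simp only [map_add, map_mul, map_zero, ← Complex.inv_eq_conj, hx, hy, hz] at hconj
  field_simp at hconj
  linear_combination hconj

lemma pair_one_neg_one_of_mul_sub_one_of_mul_add_one {R : Type*} [CommRing R] [NoZeroDivisors R]
    (hR : (1 : R) ≠ -1) {x y z : R} (h₁ : (x - 1) * (y - 1) * (z - 1) = 0)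
    (h₂ : (x + 1) * (y + 1) * (z + 1) = 0) :
    ((x = 1 ∧ y = -1) ∨ (x = -1 ∧ y = 1)) ∨
    ((x = 1 ∧ z = -1) ∨ (x = -1 ∧ z = 1)) ∨
    ((y = 1 ∧ z = -1) ∨ (y = -1 ∧ z = 1)) := by
  simp only [mul_eq_zero, sub_eq_zero, add_eq_zero_iff_eq_neg] at h₁ h₂
  grind

theorem stmt_14 (x y z : ℂ) (hx : IsRootOfUnity x) (hy : IsRootOfUnity y)
    (hz : IsRootOfUnity z) (h : x * y * z + x + y + z = 0) :
    ((x = 1 ∧ y = -1) ∨ (x = -1 ∧ y = 1)) ∨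
    ((x = 1 ∧ z = -1) ∨ (x = -1 ∧ z = 1)) ∨
    ((y = 1 ∧ z = -1) ∨ (y = -1 ∧ z = 1)) := by
  have h' := mul_add_mul_add_mul_add_one_eq_zero_of_norm_eq_one
    hx.norm_eq_one hy.norm_eq_one hz.norm_eq_one h
  exact pair_one_neg_one_of_mul_sub_one_of_mul_add_one (by norm_num)
    (by linear_combination h - h') (by linear_combination h + h')
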